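/- Let {n₁, n₂, n₃} be an orthonormal basis of ℝ³ and ρ a qubit density matrix. Then every pure-state decomposition ρ = ∑ₖ pₖ |ψₖ⟩⟨ψₖ| satisfies ∑ₖ pₖ (ΔL_{n₁})²_{ψₖ} + (ΔL_{n₂})²_ρ + (ΔL_{n₃})²_ρ ≥ 1/2, and there exists a pure-state decomposition for which equality holds. (Since the quantum Fisher information is the convex roof of four times the variance, this expresses the qubit uncertainty equality (1/4)F_Q[ρ, L_{n₁}] + (ΔL_{n₂})²_ρ + (ΔL_{n₃})²_ρ = 1/2.) -/

import Mathlib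

open Matrix BigOperators
open scoped ComplexOrder

/-- The Pauli matrix σx. -/
def sigmaX : Matrix (Fin 2) (Fin 2) ℂ := !![0, 1; 1, 0]

/-- The Pauli matrix σy. -/
def sigmaY : Matrix (Fin 2) (Fin 2) ℂ := !![0, -Complex.I; Complex.I, 0]

/-- The Pauli matrix σz. -/
def sigmaZ : Matrix (Fin 2) (Fin 2) ℂ := !![1, 0; 0, -1]

/-- The spin-1/2 operator L_n = (n₁σx + n₂σy + n₃σz)/2 along the direction n ∈ ℝ³. -/
noncomputable def Lspin (n : Fin 3 → ℝ) : Matrix (Fin 2) (Fin 2) ℂ :=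
  (1 / 2 : ℂ) • ((n 0 : ℂ) • sigmaX + (n 1 : ℂ) • sigmaY + (n 2 : ℂ) • sigmaZ)

/-- A qubit density matrix: 2×2 positive semidefinite with unit trace. -/
def IsDensity (ρ : Matrix (Fin 2) (Fin 2) ℂ) : Prop :=
  ρ.PosSemidef ∧ ρ.trace = 1

/-- The rank-one projection |ψ⟩⟨ψ|. -/
def ketbra (ψ : Fin 2 → ℂ) : Matrix (Fin 2) (Fin 2) ℂ :=
  Matrix.vecMulVec ψ (star ψ)

/-- Pure-state variance (ΔA)²_ψ = ⟨ψ, A²ψ⟩ − ⟨ψ, Aψ⟩². -/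
noncomputable def pureVar (A : Matrix (Fin 2) (Fin 2) ℂ) (ψ : Fin 2 → ℂ) : ℝ :=
  (star ψ ⬝ᵥ (A * A).mulVec ψ).re - ((star ψ ⬝ᵥ A.mulVec ψ).re) ^ 2

/-- Mixed-state variance (ΔA)²_ρ = Tr(A²ρ) − (Tr(Aρ))². -/
noncomputable def mixVar (A ρ : Matrix (Fin 2) (Fin 2) ℂ) : ℝ :=
  ((A * A * ρ).trace).re - (((A * ρ).trace).re) ^ 2

/-- The purity Tr(ρ²). -/
noncomputable def purity (ρ : Matrix (Fin 2) (Fin 2) ℂ) : ℝ :=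
  ((ρ * ρ).trace).re

/-! Write a qubit state as `blochMat s = (1 + s·σ)/2`. Then `L_n² = 1/4`, `⟨L_n⟩ = n·s/2`, and pure
states are exactly the unit Bloch vectors (their determinant vanishes). For a pure state, Parseval
in the basis `n₁, n₂, n₃` turns `(ΔL_{n₁})²` into `⟨L_{n₂}⟩² + ⟨L_{n₃}⟩²`, so for a decomposition
`ρ = ∑ pₖ |ψₖ⟩⟨ψₖ|` the left-hand side is `1/2` plus a quarter of the `p`-weighted variances of
`n₂·sₖ` and `n₃·sₖ`, which are nonnegative by Jensen. Equality holds when all `sₖ` have the same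
`n₂`- and `n₃`-components: split the Bloch vector of `ρ` along the chord of the Bloch sphere
through it in direction `n₁`. -/

theorem Matrix.dotProduct_mulVec_self_of_mul_transpose_eq_one {ι R : Type*} [Fintype ι]
    [DecidableEq ι] [CommRing R] {N : Matrix ι ι R} (hN : N * Nᵀ = 1) (s : ι → R) :
    N *ᵥ s ⬝ᵥ N *ᵥ s = s ⬝ᵥ s := by
  rw [dotProduct_mulVec, ← mulVec_transpose, mulVec_mulVec, mul_eq_one_comm.mp hN, one_mulVec]

noncomputable def blochMat (s : Fin 3 → ℝ) : Matrix (Fin 2) (Fin 2) ℂ :=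
  (1 / 2 : ℂ) • (1 + (s 0 : ℂ) • sigmaX + (s 1 : ℂ) • sigmaY + (s 2 : ℂ) • sigmaZ)

theorem blochMat_fin_two (s : Fin 3 → ℝ) :
    blochMat s = !![(1 + (s 2 : ℂ)) / 2, (s 0 - s 1 * Complex.I) / 2;
                    (s 0 + s 1 * Complex.I) / 2, (1 - s 2) / 2] := by
  ext i j
  fin_cases i <;> fin_cases j <;> simp [blochMat, sigmaX, sigmaY, sigmaZ] <;> ring

theorem Lspin_fin_two (n : Fin 3 → ℝ) :
    Lspin n = !![(n 2 : ℂ) / 2, (n 0 - n 1 * Complex.I) / 2;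
                 (n 0 + n 1 * Complex.I) / 2, -(n 2 : ℂ) / 2] := by
  ext i j
  fin_cases i <;> fin_cases j <;> simp [Lspin, sigmaX, sigmaY, sigmaZ] <;> ring

theorem Lspin_mul_self (n : Fin 3 → ℝ) : Lspin n * Lspin n = ((n ⬝ᵥ n / 4 : ℝ) : ℂ) • 1 := by
  rw [Lspin_fin_two, Matrix.mul_fin_two]
  simp only [dotProduct, Fin.sum_univ_three]
  ext i j
  fin_cases i <;> fin_cases j <;> simp <;>
    first | ring1 | linear_combination (-(n 1 : ℂ) ^ 2 / 4) * Complex.I_sq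

theorem trace_blochMat (s : Fin 3 → ℝ) : (blochMat s).trace = 1 := by
  rw [blochMat_fin_two, trace_fin_two_of]; ring

theorem trace_Lspin_mul_blochMat (n s : Fin 3 → ℝ) :
    (Lspin n * blochMat s).trace = ((n ⬝ᵥ s / 2 : ℝ) : ℂ) := by
  rw [Lspin_fin_two, blochMat_fin_two, Matrix.mul_fin_two, trace_fin_two_of]
  simp only [dotProduct, Fin.sum_univ_three]
  push_cast
  linear_combination (-(n 1 : ℂ) * s 1 / 2) * Complex.I_sq

theorem det_blochMat (s : Fin 3 → ℝ) : (blochMat s).det = (((1 - s ⬝ᵥ s) / 4 : ℝ) : ℂ) := by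
  rw [blochMat_fin_two, det_fin_two_of]
  simp only [dotProduct, Fin.sum_univ_three]
  push_cast
  linear_combination (s 1 ^ 2 / 4 : ℂ) * Complex.I_sq

theorem mixVar_Lspin_blochMat (n s : Fin 3 → ℝ) :
    mixVar (Lspin n) (blochMat s) = (n ⬝ᵥ n - (n ⬝ᵥ s) ^ 2) / 4 := by
  rw [mixVar, Lspin_mul_self, smul_mul, one_mul, trace_smul, trace_blochMat,
    trace_Lspin_mul_blochMat, smul_eq_mul, mul_one, Complex.ofReal_re, Complex.ofReal_re]
  ring

theorem trace_mul_ketbra (A : Matrix (Fin 2) (Fin 2) ℂ) (ψ : Fin 2 → ℂ) :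
    (A * ketbra ψ).trace = star ψ ⬝ᵥ A *ᵥ ψ := by
  rw [ketbra, mul_vecMulVec, trace_vecMulVec, dotProduct_comm]

theorem pureVar_eq_mixVar_ketbra (A : Matrix (Fin 2) (Fin 2) ℂ) (ψ : Fin 2 → ℂ) :
    pureVar A ψ = mixVar A (ketbra ψ) := by
  rw [pureVar, mixVar, trace_mul_ketbra, trace_mul_ketbra]

theorem trace_ketbra (ψ : Fin 2 → ℂ) : (ketbra ψ).trace = star ψ ⬝ᵥ ψ := by
  rw [ketbra, trace_vecMulVec, dotProduct_comm]

theorem isHermitian_ketbra (ψ : Fin 2 → ℂ) : (ketbra ψ).IsHermitian := by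
  simp [ketbra, IsHermitian, conjTranspose_vecMulVec]

theorem det_ketbra (ψ : Fin 2 → ℂ) : (ketbra ψ).det = 0 := det_vecMulVec _ _

theorem exists_eq_blochMat {A : Matrix (Fin 2) (Fin 2) ℂ} (hA : A.IsHermitian)
    (htr : A.trace = 1) : ∃ s, A = blochMat s := by
  have h00 := hA.apply 0 0
  have h11 := hA.apply 1 1
  have h01 := hA.apply 0 1
  rw [trace_fin_two] at htr
  refine ⟨![2 * (A 1 0).re, 2 * (A 1 0).im, (A 0 0 - A 1 1).re], ?_⟩
  rw [blochMat_fin_two]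
  ext i j
  fin_cases i <;> fin_cases j <;> simp [Complex.ext_iff] at * <;> constructor <;> linarith

theorem sum_smul_blochMat {m : ℕ} {p : Fin m → ℝ} (hp : ∑ k, p k = 1) (s : Fin m → Fin 3 → ℝ) :
    ∑ k, p k • blochMat (s k) = blochMat (∑ k, p k • s k) := by
  simp only [blochMat, smul_comm (p _) (1 / 2 : ℂ), ← Finset.smul_sum, smul_add,
    Finset.sum_add_distrib, ← Finset.sum_smul, hp, one_smul, smul_smul, Finset.sum_apply,
    Pi.smul_apply, smul_eq_mul, Complex.ofReal_sum, Complex.ofReal_mul]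
  simp only [← smul_assoc, Complex.real_smul, ← Finset.sum_smul, Finset.mul_sum, mul_left_comm]

theorem exists_blochMat_eq_ketbra {ψ : Fin 2 → ℂ} (hψ : star ψ ⬝ᵥ ψ = 1) :
    ∃ s, s ⬝ᵥ s = 1 ∧ ketbra ψ = blochMat s := by
  obtain ⟨s, hs⟩ := exists_eq_blochMat (isHermitian_ketbra ψ) (by rw [trace_ketbra, hψ])
  have hdet := det_ketbra ψ
  rw [hs, det_blochMat, Complex.ofReal_eq_zero] at hdet
  exact ⟨s, by linarith, hs⟩

theorem dotProduct_self_le_one_of_posSemidef_blochMat {s : Fin 3 → ℝ} (h : (blochMat s).PosSemidef) :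
    s ⬝ᵥ s ≤ 1 := by
  have hdet := h.det_nonneg
  rw [det_blochMat, Complex.zero_le_real] at hdet
  linarith

theorem exists_ketbra_eq_blochMat {s : Fin 3 → ℝ} (hs : s ⬝ᵥ s = 1) :
    ∃ ψ, ketbra ψ = blochMat s := by
  simp only [dotProduct, Fin.sum_univ_three] at hs
  rcases eq_or_ne (s 2) (-1) with h | h
  · have h0 : s 0 = 0 := by nlinarith
    have h1 : s 1 = 0 := by nlinarith
    refine ⟨![0, 1], ?_⟩
    rw [blochMat_fin_two, h0, h1, h]
    ext i j
    fin_cases i <;> fin_cases j <;> simp [ketbra, vecMulVec]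
  · have hpos : 0 < 1 + s 2 := lt_of_le_of_ne (by nlinarith) fun h' => h (by linarith)
    set d := √(2 * (1 + s 2))
    have hd : (d : ℂ) ^ 2 = 2 * (1 + s 2) := by
      rw [← Complex.ofReal_pow, Real.sq_sqrt (by linarith)]; push_cast; ring
    have hd0 : (d : ℂ) ≠ 0 := by
      rw [Complex.ofReal_ne_zero]; exact (Real.sqrt_pos.mpr (by linarith)).ne'
    have hs' : (s 0 : ℂ) ^ 2 + s 1 ^ 2 + s 2 * s 2 = 1 := by norm_cast; linarith
    -- the first column of `blochMat s`, divided by the square root of its first entry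
    refine ⟨![d / 2, (s 0 + s 1 * Complex.I) / d], ?_⟩
    rw [blochMat_fin_two]
    ext i j
    fin_cases i <;> fin_cases j <;>
      simp [ketbra, vecMulVec, Complex.conj_ofReal, map_ofNat] <;> field_simp <;>
      first
        | ring1
        | linear_combination hd
        | linear_combination (2 : ℂ) * hs' - (1 - (s 2 : ℂ)) * hd - 2 * (s 1 : ℂ) ^ 2 * Complex.I_sq

theorem star_dotProduct_self_of_ketbra_eq_blochMat {ψ : Fin 2 → ℂ} {s : Fin 3 → ℝ}
    (h : ketbra ψ = blochMat s) : star ψ ⬝ᵥ ψ = 1 := by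
  rw [← trace_ketbra, h, trace_blochMat]

theorem sq_dotProduct_add_sq_add_sq_of_orthonormal {n₁ n₂ n₃ : Fin 3 → ℝ}
    (h11 : n₁ ⬝ᵥ n₁ = 1) (h22 : n₂ ⬝ᵥ n₂ = 1) (h33 : n₃ ⬝ᵥ n₃ = 1)
    (h12 : n₁ ⬝ᵥ n₂ = 0) (h13 : n₁ ⬝ᵥ n₃ = 0) (h23 : n₂ ⬝ᵥ n₃ = 0) (s : Fin 3 → ℝ) :
    (n₁ ⬝ᵥ s) ^ 2 + (n₂ ⬝ᵥ s) ^ 2 + (n₃ ⬝ᵥ s) ^ 2 = s ⬝ᵥ s := by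
  have hN : of ![n₁, n₂, n₃] * (of ![n₁, n₂, n₃])ᵀ = 1 := by
    ext i j
    change ![n₁, n₂, n₃] i ⬝ᵥ ![n₁, n₂, n₃] j = (1 : Matrix (Fin 3) (Fin 3) ℝ) i j
    fin_cases i <;> fin_cases j <;>
      simp [h11, h22, h33, h12, h13, h23, dotProduct_comm n₂ n₁,
        dotProduct_comm n₃ n₁, dotProduct_comm n₃ n₂]
  have := dotProduct_mulVec_self_of_mul_transpose_eq_one hN s
  rw [dotProduct, Fin.sum_univ_three] at this
  simpa [sq] using this

def weightedVar {ι : Type*} [Fintype ι] (p x : ι → ℝ) : ℝ :=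
  ∑ k, p k * x k ^ 2 - (∑ k, p k * x k) ^ 2

theorem weightedVar_nonneg {ι : Type*} [Fintype ι] {p : ι → ℝ} (hp0 : ∀ k, 0 ≤ p k)
    (hp1 : ∑ k, p k = 1) (x : ι → ℝ) : 0 ≤ weightedVar p x :=
  sub_nonneg.mpr <| (even_two.convexOn_pow (𝕜 := ℝ)).map_sum_le (fun k _ => hp0 k) hp1
    (fun _ _ => Set.mem_univ _)

theorem weightedVar_eq_zero_of_forall_eq {ι : Type*} [Fintype ι] {p x : ι → ℝ} {c : ℝ}
    (hp1 : ∑ k, p k = 1) (hx : ∀ k, x k = c) : weightedVar p x = 0 := by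
  simp only [weightedVar, hx, ← Finset.sum_mul, hp1]
  ring

theorem exists_convex_comb_of_dotProduct_self_le_one {ι : Type*} [Fintype ι] {b u : ι → ℝ}
    (hb : b ⬝ᵥ b ≤ 1) (hu : u ⬝ᵥ u = 1) :
    ∃ a c x y : ℝ, 0 ≤ a ∧ 0 ≤ c ∧ a + c = 1 ∧ a • (b + x • u) + c • (b + y • u) = b ∧
      (b + x • u) ⬝ᵥ (b + x • u) = 1 ∧ (b + y • u) ⬝ᵥ (b + y • u) = 1 := by
  set D := √((u ⬝ᵥ b) ^ 2 + (1 - b ⬝ᵥ b))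
  have hD : D ^ 2 = (u ⬝ᵥ b) ^ 2 + (1 - b ⬝ᵥ b) := Real.sq_sqrt (by nlinarith)
  have hlen (x : ℝ) : (b + x • u) ⬝ᵥ (b + x • u) = b ⬝ᵥ b + 2 * x * (u ⬝ᵥ b) + x ^ 2 := by
    simp only [add_dotProduct, dotProduct_add, smul_dotProduct, dotProduct_smul, smul_eq_mul,
      dotProduct_comm b u, hu]
    ring
  have habs : |u ⬝ᵥ b| ≤ D := Real.abs_le_sqrt (by linarith)
  have hzero : (0 : ℝ) ∈ segment ℝ (-(u ⬝ᵥ b) - D) (-(u ⬝ᵥ b) + D) := by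
    rw [segment_eq_Icc (by linarith [abs_nonneg (u ⬝ᵥ b)])]
    constructor <;> linarith [le_abs_self (u ⬝ᵥ b), neg_abs_le (u ⬝ᵥ b)]
  obtain ⟨a, c, ha, hc, hac, hx⟩ := hzero
  refine ⟨a, c, -(u ⬝ᵥ b) - D, -(u ⬝ᵥ b) + D, ha, hc, hac, ?_, ?_, ?_⟩
  · linear_combination (norm := module) hac • b + hx • u
  · rw [hlen]; linear_combination hD
  · rw [hlen]; linear_combination hD

theorem sum_mul_mixVar_add_mixVar_add_mixVar {n₁ n₂ n₃ : Fin 3 → ℝ}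
    (h11 : n₁ ⬝ᵥ n₁ = 1) (h22 : n₂ ⬝ᵥ n₂ = 1) (h33 : n₃ ⬝ᵥ n₃ = 1)
    (h12 : n₁ ⬝ᵥ n₂ = 0) (h13 : n₁ ⬝ᵥ n₃ = 0) (h23 : n₂ ⬝ᵥ n₃ = 0)
    {m : ℕ} {p : Fin m → ℝ} {s : Fin m → Fin 3 → ℝ}
    (hs : ∀ k, s k ⬝ᵥ s k = 1) {b : Fin 3 → ℝ} (hb : ∑ k, p k • s k = b) :
    (∑ k, p k * mixVar (Lspin n₁) (blochMat (s k))) + mixVar (Lspin n₂) (blochMat b)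
        + mixVar (Lspin n₃) (blochMat b)
      = 1 / 2 + (weightedVar p (fun k => n₂ ⬝ᵥ s k) + weightedVar p (fun k => n₃ ⬝ᵥ s k)) / 4 := by
  have hpure (k : Fin m) : p k * mixVar (Lspin n₁) (blochMat (s k))
      = (p k * (n₂ ⬝ᵥ s k) ^ 2 + p k * (n₃ ⬝ᵥ s k) ^ 2) / 4 := by
    rw [mixVar_Lspin_blochMat, h11]
    linear_combination (-p k / 4) *
      ((sq_dotProduct_add_sq_add_sq_of_orthonormal h11 h22 h33 h12 h13 h23 (s k)).trans (hs k))
  simp only [hpure]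
  simp only [← Finset.sum_div, Finset.sum_add_distrib, mixVar_Lspin_blochMat, h22, h33,
    ← hb, dotProduct_sum, dotProduct_smul, smul_eq_mul, weightedVar]
  ring

/-- Qubit uncertainty equality (1/4)F_Q[ρ,L_{n₁}] + (ΔL_{n₂})²_ρ + (ΔL_{n₃})²_ρ = 1/2,
expressed via pure-state decompositions: every decomposition gives a sum ≥ 1/2,
and some decomposition attains 1/2. -/
theorem stmt_9 (n₁ n₂ n₃ : Fin 3 → ℝ)
    (h11 : n₁ ⬝ᵥ n₁ = 1) (h22 : n₂ ⬝ᵥ n₂ = 1) (h33 : n₃ ⬝ᵥ n₃ = 1)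
    (h12 : n₁ ⬝ᵥ n₂ = 0) (h13 : n₁ ⬝ᵥ n₃ = 0) (h23 : n₂ ⬝ᵥ n₃ = 0)
    (ρ : Matrix (Fin 2) (Fin 2) ℂ) (hρ : IsDensity ρ) :
    (∀ (m : ℕ) (p : Fin m → ℝ) (ψ : Fin m → (Fin 2 → ℂ)),
      (∀ k, 0 ≤ p k) → (∑ k, p k) = 1 →
      (∀ k, star (ψ k) ⬝ᵥ ψ k = 1) →
      ρ = (∑ k, p k • ketbra (ψ k)) →
      1 / 2 ≤ (∑ k, p k * pureVar (Lspin n₁) (ψ k))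
                + mixVar (Lspin n₂) ρ + mixVar (Lspin n₃) ρ) ∧
    (∃ (m : ℕ) (p : Fin m → ℝ) (ψ : Fin m → (Fin 2 → ℂ)),
      (∀ k, 0 ≤ p k) ∧ (∑ k, p k) = 1 ∧
      (∀ k, star (ψ k) ⬝ᵥ ψ k = 1) ∧
      ρ = (∑ k, p k • ketbra (ψ k)) ∧
      (∑ k, p k * pureVar (Lspin n₁) (ψ k))
        + mixVar (Lspin n₂) ρ + mixVar (Lspin n₃) ρ = 1 / 2) := by
  refine ⟨fun m p ψ hp0 hp1 hψ hρψ => ?_, ?_⟩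
  · choose s hs hψs using fun k => exists_blochMat_eq_ketbra (hψ k)
    simp only [hρψ, pureVar_eq_mixVar_ketbra, hψs, sum_smul_blochMat hp1]
    rw [sum_mul_mixVar_add_mixVar_add_mixVar h11 h22 h33 h12 h13 h23 hs rfl]
    linarith [weightedVar_nonneg hp0 hp1 (fun k => n₂ ⬝ᵥ s k),
      weightedVar_nonneg hp0 hp1 (fun k => n₃ ⬝ᵥ s k)]
  · obtain ⟨b, rfl⟩ := exists_eq_blochMat hρ.1.1 hρ.2
    obtain ⟨a, c, x, y, ha, hc, hac, hb, hx, hy⟩ :=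
      exists_convex_comb_of_dotProduct_self_le_one (dotProduct_self_le_one_of_posSemidef_blochMat hρ.1) h11
    obtain ⟨ψ₁, hψ₁⟩ := exists_ketbra_eq_blochMat hx
    obtain ⟨ψ₂, hψ₂⟩ := exists_ketbra_eq_blochMat hy
    set s := ![b + x • n₁, b + y • n₁]
    have hψs : ∀ k, ketbra (![ψ₁, ψ₂] k) = blochMat (s k) := Fin.forall_fin_two.mpr ⟨hψ₁, hψ₂⟩
    have hp1 : ∑ k, ![a, c] k = 1 := by simpa using hac
    have hsb : ∑ k, ![a, c] k • s k = b := by simpa [s] using hb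
    have hs_perp (n : Fin 3 → ℝ) (hn : n₁ ⬝ᵥ n = 0) (k : Fin 2) : n ⬝ᵥ s k = n ⬝ᵥ b := by
      fin_cases k <;> simp [s, dotProduct_add, dotProduct_smul, dotProduct_comm n n₁, hn]
    refine ⟨2, ![a, c], ![ψ₁, ψ₂], Fin.forall_fin_two.mpr ⟨ha, hc⟩, hp1,
      fun k => star_dotProduct_self_of_ketbra_eq_blochMat (hψs k), ?_, ?_⟩
    · rw [← hsb, ← sum_smul_blochMat hp1]
      simp only [hψs]
    · simp only [pureVar_eq_mixVar_ketbra, hψs]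
      rw [sum_mul_mixVar_add_mixVar_add_mixVar h11 h22 h33 h12 h13 h23
          (Fin.forall_fin_two.mpr ⟨hx, hy⟩) hsb,
        weightedVar_eq_zero_of_forall_eq hp1 (hs_perp n₂ h12),
        weightedVar_eq_zero_of_forall_eq hp1 (hs_perp n₃ h13)]
      norm_num
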